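/- arXiv:2304.14962 — 2 statements merged into one kernel-verified Lean document; each statement's English description precedes it below -/
import Mathlib

section
/- Let o, x ∈ ℝ^n, let p and q be points of the segment [o, x], let f : ℝ^n → ℝ be a linear functional, and let c ∈ ℝ satisfy f(o) < c, f(p) ≤ c, and f(q) > c. Then p lies on the segment [o, q] and ‖p − o‖ < ‖q − o‖. (This is the strictly increasing bounded invariant used to prove that the MPR algorithm terminates.) -/
/-- If `p, q` lie on the segment `[o, x]`, and a linear functional `f` and
constant `c` satisfy `f o < c`, `f p ≤ c` and `f q > c`, then `p` lies on the segment
`[o, q]` and `‖p - o‖ < ‖q - o‖` (the strictly increasing bounded invariant of MPR). -/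
theorem stmt_8 {n : ℕ} (o x p q : EuclideanSpace ℝ (Fin n))
    (hp : p ∈ segment ℝ o x) (hq : q ∈ segment ℝ o x)
    (f : EuclideanSpace ℝ (Fin n) →ₗ[ℝ] ℝ) (c : ℝ)
    (ho : f o < c) (hpc : f p ≤ c) (hqc : c < f q) :
    p ∈ segment ℝ o q ∧ ‖p - o‖ < ‖q - o‖ := by
  rw [segment_eq_image'] at hp hq
  obtain ⟨s, ⟨hs0, hs1⟩, hps⟩ := hp
  obtain ⟨t, ⟨ht0, ht1⟩, hqt⟩ := hq
  have hfp : f p = f o + s * f (x - o) := by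
    rw [← hps]; simp [map_add, map_smul]
  have hfq : f q = f o + t * f (x - o) := by
    rw [← hqt]; simp [map_add, map_smul]
  set d := f (x - o) with hd
  have htd : 0 < t * d := by nlinarith
  have hdpos : 0 < d := by nlinarith
  have htpos : 0 < t := by nlinarith
  have hst : s < t := by
    have h1 : s * d ≤ c - f o := by nlinarith
    have h2 : c - f o < t * d := by nlinarith
    nlinarith
  have hxo : x - o ≠ 0 := by
    intro h; rw [h, map_zero] at hd; nlinarith
  have hqo : q - o = t • (x - o) := by rw [← hqt]; exact add_sub_cancel_left o _
  have hpo : p - o = s • (x - o) := by rw [← hps]; exact add_sub_cancel_left o _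
  constructor
  · rw [segment_eq_image']
    refine ⟨s / t, ⟨by positivity, by
      rw [div_le_one htpos]; linarith⟩, ?_⟩
    rw [← hqt]
    have : q - o = t • (x - o) := hqo
    rw [← hps]
    simp only [add_sub_cancel_left, smul_smul]
    rw [div_mul_cancel₀ _ (ne_of_gt htpos)]
  · rw [hpo, hqo, norm_smul, norm_smul]
    have hn : 0 < ‖x - o‖ := norm_pos_iff.mpr hxo
    simp only [Real.norm_eq_abs, abs_of_nonneg hs0, abs_of_nonneg ht0]
    exact mul_lt_mul_of_pos_right hst hn
end

section
/- Let x_0, …, x_n be n+1 affinely independent points spanning ℝ^n, let Q be their convex hull, let o be a point in the interior of Q, and let x ∈ ℝ^n with x ∉ Q. Then there exist an index i and t ∈ (0, 1) such that the point o + t·(x − o) lies in the convex hull of {x_j : j ≠ i}; i.e., the segment [o, x] crosses a facet of the simplex Q, and this facet can serve as the initial portal of the MPR algorithm. -/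
/-- Let `x 0, …, x n` be affinely independent points spanning `ℝ^n`, `Q` their
convex hull, `o ∈ interior Q` and `p ∉ Q`. Then the segment `[o, p]` crosses a facet of the
simplex `Q`: there exist an index `i` and `t ∈ (0, 1)` with `o + t • (p - o)` in the convex
hull of `{x j : j ≠ i}`. -/
theorem stmt_14 {n : ℕ} (x : Fin (n + 1) → EuclideanSpace ℝ (Fin n))
    (hx : AffineIndependent ℝ x)
    (hspan : affineSpan ℝ (Set.range x) = ⊤)
    (o p : EuclideanSpace ℝ (Fin n))
    (ho : o ∈ interior (convexHull ℝ (Set.range x)))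
    (hp : p ∉ convexHull ℝ (Set.range x)) :
    ∃ i : Fin (n + 1), ∃ t ∈ Set.Ioo (0 : ℝ) 1,
      o + t • (p - o) ∈ convexHull ℝ (x '' {j | j ≠ i}) := by
  classical
  let b : AffineBasis (Fin (n + 1)) ℝ (EuclideanSpace ℝ (Fin n)) := ⟨x, hx, hspan⟩
  have hbx : Set.range ⇑b = Set.range x := rfl
  have ho' : ∀ i, 0 < b.coord i o := by
    rw [← hbx, b.interior_convexHull] at ho; exact ho
  have hp' : ∃ i, b.coord i p < 0 := by
    by_contra h
    push_neg at h
    apply hp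
    rw [← hbx, b.convexHull_eq_nonneg_coord]
    exact h
  obtain ⟨i₀, hi₀⟩ := hp'
  -- weights along the segment
  set w : Fin (n + 1) → ℝ := fun j => b.coord j o with hw
  set v : Fin (n + 1) → ℝ := fun j => b.coord j p with hv
  set T : Fin (n + 1) → ℝ := fun j => w j / (w j - v j) with hT
  set S : Finset (Fin (n + 1)) := Finset.univ.filter (fun j => v j < 0) with hS
  have hSne : S.Nonempty := ⟨i₀, by simp [hS, hi₀]; exact hi₀⟩
  obtain ⟨i, hiS, hmin⟩ := S.exists_min_image T hSne
  have hvi : v i < 0 := by simpa [hS] using hiS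
  have hwi : 0 < w i := ho' i
  have hdenom : 0 < w i - v i := by linarith
  set t : ℝ := T i with ht
  have ht0 : 0 < t := div_pos hwi hdenom
  have ht1 : t < 1 := (div_lt_one hdenom).2 (by linarith)
  refine ⟨i, t, ⟨ht0, ht1⟩, ?_⟩
  set q : EuclideanSpace ℝ (Fin n) := o + t • (p - o) with hq
  have hqline : q = AffineMap.lineMap o p t := by
    simp [hq, AffineMap.lineMap_apply]
    module
  -- barycentric coordinates of q
  have hcoord : ∀ j, b.coord j q = w j + t * (v j - w j) := by
    intro j
    rw [hqline, AffineMap.apply_lineMap]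
    simp [AffineMap.lineMap_apply, hw, hv]
    ring
  have hcoordi : b.coord i q = 0 := by
    rw [hcoord i]
    have key : t * (w i - v i) = w i := by
      show w i / (w i - v i) * (w i - v i) = w i
      exact div_mul_cancel₀ _ hdenom.ne'
    linear_combination -key
  have hcoordnn : ∀ j, 0 ≤ b.coord j q := by
    intro j
    rw [hcoord j]
    by_cases hvj : v j < 0
    · have hjS : j ∈ S := by simp [hS, hvj]
      have htj : t ≤ T j := hmin j hjS
      have hwj : 0 < w j := ho' j
      have hdj : 0 < w j - v j := by linarith
      have : t * (w j - v j) ≤ w j := by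
        calc t * (w j - v j) ≤ T j * (w j - v j) := by
              exact mul_le_mul_of_nonneg_right htj hdj.le
          _ = w j := by
            show w j / (w j - v j) * (w j - v j) = w j
            exact div_mul_cancel₀ _ hdj.ne'
      nlinarith
    · push_neg at hvj
      have hwj : 0 < w j := ho' j
      nlinarith
  -- express q as an affine combination over the erased index set
  have hsum : ∑ j, b.coord j q = 1 := b.sum_coord_apply_eq_one q
  have hsum' : ∑ j ∈ Finset.univ.erase i, b.coord j q = 1 := by
    rw [← hsum]
    exact Finset.sum_erase _ hcoordi
  have hrepr : q = (Finset.univ.erase i).affineCombination ℝ x (fun j => b.coord j q) := by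
    have h1 : q = Finset.univ.affineCombination ℝ x (fun j => b.coord j q) :=
      (b.affineCombination_coord_eq_self q).symm
    have h2 : (Finset.univ.erase i).affineCombination ℝ x (fun j => b.coord j q)
        = Finset.univ.affineCombination ℝ x
          (Set.indicator ↑(Finset.univ.erase i) (fun j => b.coord j q)) :=
      Finset.affineCombination_indicator_subset _ _ (Finset.subset_univ _)
    have h3 : Set.indicator ↑(Finset.univ.erase i) (fun j => b.coord j q)
        = fun j => b.coord j q := by
      funext j
      by_cases hj : j = i
      · subst hj
        simp [Set.indicator, hcoordi]
      · simp [Set.indicator, hj]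
    rw [h2, h3, ← h1]
  rw [hrepr, affineCombination_eq_centerMass hsum']
  exact Finset.centerMass_mem_convexHull _ (fun j _ => hcoordnn j) (by rw [hsum']; norm_num)
    (fun j hj => ⟨j, by simpa using (Finset.mem_erase.1 hj).1, rfl⟩)
end
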